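/- For the Hamiltonian H = (1/2)(p2^2 - p1^2) + (k/2)(q2^2 - q1^2) - (m^2/4)(q2^2 - q1^2)^2 on R^4 with canonical Poisson bracket, the function I = q1 p2 + q2 p1 satisfies {H, I} = 0. -/

import Mathlib

/-- Canonical Poisson bracket on ℝ⁴ with coordinates (q1, q2, p1, p2) = (x 0, x 1, x 2, x 3). -/
noncomputable def poissonBracket (F G : (Fin 4 → ℝ) → ℝ) (x : Fin 4 → ℝ) : ℝ :=
    fderiv ℝ F x (Pi.single 0 1) * fderiv ℝ G x (Pi.single 2 1)
  + fderiv ℝ F x (Pi.single 1 1) * fderiv ℝ G x (Pi.single 3 1)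
  - fderiv ℝ F x (Pi.single 2 1) * fderiv ℝ G x (Pi.single 0 1)
  - fderiv ℝ F x (Pi.single 3 1) * fderiv ℝ G x (Pi.single 1 1)

/-!
`I = q1 p2 + q2 p1` generates the simultaneous hyperbolic rotation of `(q1, q2)` and of `(p1, p2)`,
whose infinitesimal generator is `(q2, q1, -p2, -p1)`. Both Minkowski intervals `q2² - q1²` and
`p2² - p1²` are invariant under it, and `H` is a function of these two intervals, so
`{H, I} = dH(X_I) = 0` by the chain rule.
-/

noncomputable def hamiltonianVectorField (G : (Fin 4 → ℝ) → ℝ) (x : Fin 4 → ℝ) : Fin 4 → ℝ :=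
  ![fderiv ℝ G x (Pi.single 2 1), fderiv ℝ G x (Pi.single 3 1),
    -fderiv ℝ G x (Pi.single 0 1), -fderiv ℝ G x (Pi.single 1 1)]

theorem poissonBracket_eq_fderiv_hamiltonianVectorField (F G : (Fin 4 → ℝ) → ℝ)
    (x : Fin 4 → ℝ) : poissonBracket F G x = fderiv ℝ F x (hamiltonianVectorField G x) := by
  have hv : ∀ v : Fin 4 → ℝ, v = v 0 • Pi.single 0 1 + v 1 • Pi.single 1 1
      + v 2 • Pi.single 2 1 + v 3 • Pi.single 3 1 := fun v => by
    ext i; fin_cases i <;> simp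
  rw [hv (hamiltonianVectorField G x)]
  simp [poissonBracket, hamiltonianVectorField]
  ring

def boostGenerator (x : Fin 4 → ℝ) : ℝ := x 0 * x 3 + x 1 * x 2

def configInterval (x : Fin 4 → ℝ) : ℝ := x 1 ^ 2 - x 0 ^ 2

def momentumInterval (x : Fin 4 → ℝ) : ℝ := x 3 ^ 2 - x 2 ^ 2

theorem hamiltonianVectorField_boostGenerator (x : Fin 4 → ℝ) :
    hamiltonianVectorField boostGenerator x = ![x 1, x 0, -x 3, -x 2] := by
  have hx (i : Fin 4) := hasFDerivAt_apply (𝕜 := ℝ) i x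
  have h : HasFDerivAt boostGenerator _ x := ((hx 0).mul (hx 3)).add ((hx 1).mul (hx 2))
  simp [hamiltonianVectorField, h.fderiv]

theorem fderiv_configInterval_boost (x : Fin 4 → ℝ) :
    fderiv ℝ configInterval x ![x 1, x 0, -x 3, -x 2] = 0 := by
  have hx (i : Fin 4) := hasFDerivAt_apply (𝕜 := ℝ) i x
  have h : HasFDerivAt configInterval _ x := ((hx 1).pow 2).sub ((hx 0).pow 2)
  simp [h.fderiv]
  ring

theorem fderiv_momentumInterval_boost (x : Fin 4 → ℝ) :
    fderiv ℝ momentumInterval x ![x 1, x 0, -x 3, -x 2] = 0 := by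
  have hx (i : Fin 4) := hasFDerivAt_apply (𝕜 := ℝ) i x
  have h : HasFDerivAt momentumInterval _ x := ((hx 3).pow 2).sub ((hx 2).pow 2)
  simp [h.fderiv]
  ring

theorem differentiable_configInterval : Differentiable ℝ configInterval := by
  unfold configInterval
  fun_prop

theorem differentiable_momentumInterval : Differentiable ℝ momentumInterval := by
  unfold momentumInterval
  fun_prop

theorem poissonBracket_boostGenerator_eq_zero (φ : ℝ × ℝ → ℝ) (x : Fin 4 → ℝ)
    (hφ : DifferentiableAt ℝ φ (momentumInterval x, configInterval x)) :
    poissonBracket (fun y => φ (momentumInterval y, configInterval y)) boostGenerator x = 0 := by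
  have hg : HasFDerivAt (fun y => (momentumInterval y, configInterval y))
      ((fderiv ℝ momentumInterval x).prod (fderiv ℝ configInterval x)) x :=
    (differentiable_momentumInterval x).hasFDerivAt.prodMk
      (differentiable_configInterval x).hasFDerivAt
  have hH : HasFDerivAt (fun y => φ (momentumInterval y, configInterval y)) _ x :=
    hφ.hasFDerivAt.comp x hg
  rw [poissonBracket_eq_fderiv_hamiltonianVectorField, hamiltonianVectorField_boostGenerator,
    hH.fderiv, ContinuousLinearMap.comp_apply, ContinuousLinearMap.prod_apply,
    fderiv_momentumInterval_boost, fderiv_configInterval_boost, Prod.mk_zero_zero, map_zero]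

theorem stmt1 (k m : ℝ) :
    let H : (Fin 4 → ℝ) → ℝ := fun x =>
      (1/2) * (x 3 ^ 2 - x 2 ^ 2) + (k/2) * (x 1 ^ 2 - x 0 ^ 2)
        - (m^2/4) * (x 1 ^ 2 - x 0 ^ 2) ^ 2
    let I : (Fin 4 → ℝ) → ℝ := fun x => x 0 * x 3 + x 1 * x 2
    ∀ x, poissonBracket H I x = 0 := by
  intro H I x
  let φ : ℝ × ℝ → ℝ := fun v => (1/2) * v.1 + (k/2) * v.2 - (m^2/4) * v.2 ^ 2
  have hφ : Differentiable ℝ φ := by fun_prop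
  change poissonBracket (fun y => φ (momentumInterval y, configInterval y)) boostGenerator x = 0
  exact poissonBracket_boostGenerator_eq_zero φ x (hφ _)
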